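/- For every complex s with σ = Re s > 1, |Z₃(s)| ≤ (σ/(σ−1)²) · 2^{2−3σ}. -/

import Mathlib

/-!
Comparing with `∫_N^∞ x^{-p} dx`, the tail `∑_{n > N} n^{-p}` is at most `N^{1-p}/(p-1)`.
With `N = 2k` this bounds the inner sum, so the `k`-th term of `Z₃(s)` has norm at most
`2^{1-σ} k^{1-2σ}/(σ-1)`. Summing over `k ≥ 2` by the same comparison, with the term `k = 2` kept
apart, gives `2^{1-σ}/(σ-1) · (2^{1-2σ} + 2^{2-2σ}/(2σ-2))`, which is exactly the stated bound.
-/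

open Complex

/-- `Z₃(s) = ∑_{k ≥ 2} k^{-s} ∑_{n ≥ 1} (2k+n)^{-s}`, with `k = m + 2`, `n = j + 1`. -/
noncomputable def Z₃ (s : ℂ) : ℂ :=
  ∑' m : ℕ, (1 / (((m : ℂ) + 2) ^ s)) *
    ∑' j : ℕ, 1 / ((2 * ((m : ℂ) + 2) + ((j : ℂ) + 1)) ^ s)

section RpowTail

open Set MeasureTheory

variable {p : ℝ} (N : ℕ)

lemma summable_rpow_neg_nat_add (hp : 1 < p) :
    Summable fun n : ℕ => ((n + N : ℕ) : ℝ) ^ (-p) :=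
  (summable_nat_add_iff N).2 (Real.summable_nat_rpow.2 (by linarith))

lemma tsum_rpow_neg_nat_add_succ_le (hN : 0 < N) (hp : 1 < p) :
    ∑' n : ℕ, ((n + N + 1 : ℕ) : ℝ) ^ (-p) ≤ (N : ℝ) ^ (1 - p) / (p - 1) := by
  have hN' : (0 : ℝ) < N := Nat.cast_pos.2 hN
  have hintegral : ∫ x in Ioi (N : ℝ), x ^ (-p) = (N : ℝ) ^ (1 - p) / (p - 1) := by
    rw [integral_Ioi_rpow_of_lt (by linarith) hN', neg_add_eq_sub, neg_div, ← div_neg, neg_sub]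
  refine hintegral ▸ AntitoneOn.tsum_comp_add_le_integral N ?_
    (integrableOn_Ioi_rpow_of_lt (by linarith) hN') fun t ht => ?_
  · exact fun x hx y _ hxy => Real.rpow_le_rpow_of_nonpos (hN'.trans_le hx) hxy (by linarith)
  · exact Real.rpow_nonneg (hN'.trans ht).le _

lemma tsum_rpow_neg_nat_add_le (hN : 0 < N) (hp : 1 < p) :
    ∑' n : ℕ, ((n + N : ℕ) : ℝ) ^ (-p) ≤ (N : ℝ) ^ (-p) + (N : ℝ) ^ (1 - p) / (p - 1) := by
  rw [(summable_rpow_neg_nat_add N hp).tsum_eq_zero_add, zero_add]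
  gcongr
  simpa only [Nat.add_right_comm] using tsum_rpow_neg_nat_add_succ_le N hN hp

end RpowTail

lemma norm_one_div_natCast_cpow {n : ℕ} (hn : 0 < n) (s : ℂ) :
    ‖1 / (n : ℂ) ^ s‖ = (n : ℝ) ^ (-s.re) := by
  rw [norm_div, norm_one, norm_natCast_cpow_of_pos hn, Real.rpow_neg n.cast_nonneg, one_div]

lemma norm_tsum_one_div_natCast_add_succ_cpow_le {N : ℕ} (hN : 0 < N) {s : ℂ} (hs : 1 < s.re) :
    ‖∑' n : ℕ, 1 / ((n + N + 1 : ℕ) : ℂ) ^ s‖ ≤ (N : ℝ) ^ (1 - s.re) / (s.re - 1) := by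
  have hnorm (n : ℕ) : ‖1 / ((n + N + 1 : ℕ) : ℂ) ^ s‖ = ((n + N + 1 : ℕ) : ℝ) ^ (-s.re) :=
    norm_one_div_natCast_cpow (by omega) s
  refine (norm_tsum_le_tsum_norm ?_).trans ?_ <;> simp only [hnorm]
  · exact summable_rpow_neg_nat_add (N + 1) hs
  · exact tsum_rpow_neg_nat_add_succ_le N hN hs

lemma norm_Z₃_summand_le {s : ℂ} (hs : 1 < s.re) (m : ℕ) :
    ‖1 / ((m : ℂ) + 2) ^ s * ∑' j : ℕ, 1 / ((2 * ((m : ℂ) + 2) + ((j : ℂ) + 1)) ^ s)‖ ≤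
      (2 : ℝ) ^ (1 - s.re) / (s.re - 1) * ((m + 2 : ℕ) : ℝ) ^ (-(2 * s.re - 1)) := by
  have hk : ((m : ℂ) + 2) = ((m + 2 : ℕ) : ℂ) := by push_cast; rfl
  have hinner (j : ℕ) : 2 * ((m : ℂ) + 2) + ((j : ℂ) + 1) = ((j + 2 * (m + 2) + 1 : ℕ) : ℂ) := by
    push_cast; ring
  have hk0 : (0 : ℝ) < ((m + 2 : ℕ) : ℝ) := by positivity
  simp only [hinner, norm_mul]
  rw [hk, norm_one_div_natCast_cpow (by omega)]
  calc _ ≤ ((m + 2 : ℕ) : ℝ) ^ (-s.re) *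
        (((2 * (m + 2) : ℕ) : ℝ) ^ (1 - s.re) / (s.re - 1)) := by
        gcongr
        exact norm_tsum_one_div_natCast_add_succ_cpow_le (by omega) hs
    _ = _ := by
        rw [Nat.cast_mul, Nat.cast_ofNat, Real.mul_rpow zero_le_two hk0.le,
          show -(2 * s.re - 1) = -s.re + (1 - s.re) by ring, Real.rpow_add hk0]
        ring

lemma two_rpow_div_mul_tail_bound_eq {σ : ℝ} (hσ : 1 < σ) :
    (2 : ℝ) ^ (1 - σ) / (σ - 1) *
        ((2 : ℝ) ^ (-(2 * σ - 1)) + (2 : ℝ) ^ (1 - (2 * σ - 1)) / (2 * σ - 1 - 1)) =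
      σ / (σ - 1) ^ 2 * (2 : ℝ) ^ (2 - 3 * σ) := by
  have h2 : (2 : ℝ) ^ (2 - 3 * σ) = 2 ^ (1 - σ) * 2 ^ (-(2 * σ - 1)) := by
    rw [← Real.rpow_add two_pos]; ring_nf
  have h1 : (2 : ℝ) ^ (1 - (2 * σ - 1)) = 2 * 2 ^ (-(2 * σ - 1)) := by
    rw [show 1 - (2 * σ - 1) = 1 + -(2 * σ - 1) by ring, Real.rpow_add two_pos, Real.rpow_one]
  have hσ' : σ - 1 ≠ 0 := by linarith
  rw [h1, h2, show 2 * σ - 1 - 1 = 2 * (σ - 1) by ring]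
  field_simp
  ring

/-- For `Re s = σ > 1`, `|Z₃(s)| ≤ (σ/(σ-1)²) · 2^{2-3σ}`. -/
theorem norm_Z₃_le (s : ℂ) (hs : 1 < s.re) :
    ‖Z₃ s‖ ≤ s.re / (s.re - 1) ^ 2 * (2 : ℝ) ^ (2 - 3 * s.re) := by
  have hp : 1 < 2 * s.re - 1 := by linarith
  have hC : 0 ≤ (2 : ℝ) ^ (1 - s.re) / (s.re - 1) := div_nonneg (by positivity) (by linarith)
  calc ‖Z₃ s‖
      ≤ ∑' m : ℕ, (2 : ℝ) ^ (1 - s.re) / (s.re - 1) * ((m + 2 : ℕ) : ℝ) ^ (-(2 * s.re - 1)) :=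
        tsum_of_norm_bounded ((summable_rpow_neg_nat_add 2 hp).mul_left _).hasSum
          (norm_Z₃_summand_le hs)
    _ = (2 : ℝ) ^ (1 - s.re) / (s.re - 1) * ∑' m : ℕ, ((m + 2 : ℕ) : ℝ) ^ (-(2 * s.re - 1)) :=
        tsum_mul_left
    _ ≤ (2 : ℝ) ^ (1 - s.re) / (s.re - 1) * ((2 : ℝ) ^ (-(2 * s.re - 1)) +
          (2 : ℝ) ^ (1 - (2 * s.re - 1)) / (2 * s.re - 1 - 1)) := by
        exact_mod_cast mul_le_mul_of_nonneg_left (tsum_rpow_neg_nat_add_le 2 two_pos hp) hC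
    _ = s.re / (s.re - 1) ^ 2 * (2 : ℝ) ^ (2 - 3 * s.re) := two_rpow_div_mul_tail_bound_eq hs
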